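/- Let Λ be a discrete k-graph with no sources such that for every v ∈ Λ^0 and every m ≠ n ∈ ℕ^k there exists λ ∈ vΛ with d(λ) ≥ m∨n and λ(m, m+d(λ)−(m∨n)) ≠ λ(n, n+d(λ)−(m∨n)). Then for every pair of paths μ, ν with r(μ)=r(ν), s(μ)=s(ν), μ ≠ ν, and d(μ) ∧ d(ν) = 0, there exists τ ∈ s(μ)Λ with MCE(μτ, ντ) = ∅. -/
import Mathlib


structure KGraph (k : ℕ) where
  Obj : Type
  Mor : Type
  src : Mor → Obj
  rng : Mor → Obj
  idm : Obj → Mor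
  comp : Mor → Mor → Mor
  deg : Mor → Fin k → ℕ
  idm_src : ∀ v, src (idm v) = v
  idm_rng : ∀ v, rng (idm v) = v
  comp_src : ∀ μ ν, src μ = rng ν → src (comp μ ν) = src ν
  comp_rng : ∀ μ ν, src μ = rng ν → rng (comp μ ν) = rng μ
  comp_assoc : ∀ μ ν ξ, src μ = rng ν → src ν = rng ξ →
    comp (comp μ ν) ξ = comp μ (comp ν ξ)
  idm_comp : ∀ μ, comp (idm (rng μ)) μ = μ
  comp_idm : ∀ μ, comp μ (idm (src μ)) = μ
  deg_comp : ∀ μ ν, src μ = rng ν → deg (comp μ ν) = deg μ + deg ν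
  deg_idm : ∀ v, deg (idm v) = 0
  factor : ∀ (l : Mor) (m n : Fin k → ℕ), deg l = m + n →
    ∃! p : Mor × Mor, src p.1 = rng p.2 ∧ deg p.1 = m ∧ deg p.2 = n ∧ comp p.1 p.2 = l

namespace KGraph

variable {k : ℕ} (G : KGraph k)

/-- The segment `l(a,b)` of a path `l`: the unique middle factor of degree `b - a`
in the factorization `l = l(0,a) l(a,b) l(b, d(l))`. -/
noncomputable def seg (l : G.Mor) (a b : Fin k → ℕ) (hab : a ≤ b) (hb : b ≤ G.deg l) : G.Mor :=
  have h1 : G.deg l = a + (G.deg l - a) := by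
    funext i
    have h2 : a i ≤ b i := hab i
    have h3 : b i ≤ G.deg l i := hb i
    simp only [Pi.add_apply, Pi.sub_apply]
    omega
  have h2 : G.deg ((G.factor l a (G.deg l - a) h1).exists.choose.2) =
      (b - a) + (G.deg l - b) := by
    have hp := (G.factor l a (G.deg l - a) h1).exists.choose_spec
    rw [hp.2.2.1]
    funext i
    have h3 : a i ≤ b i := hab i
    have h4 : b i ≤ G.deg l i := hb i
    simp only [Pi.add_apply, Pi.sub_apply]
    omega
  ((G.factor _ (b - a) (G.deg l - b) h2).exists.choose).1

/-- `l` is a common extension of `μ` and `ν`. -/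
def CommonExt (μ ν l : G.Mor) : Prop :=
  (∃ μ', G.src μ = G.rng μ' ∧ G.comp μ μ' = l) ∧
  (∃ ν', G.src ν = G.rng ν' ∧ G.comp ν ν' = l)

/-- The set of minimal common extensions of `μ` and `ν`. -/
def MCE (μ ν : G.Mor) : Set G.Mor :=
  {l | G.CommonExt μ ν l ∧ G.deg l = G.deg μ ⊔ G.deg ν}

/-- A finite path of shape `len`: a degree-preserving functor from the grid graph
`Ω_{k,len}` to `G`. -/
structure Path (G : KGraph k) where
  len : Fin k → ℕ
  map : (p q : Fin k → ℕ) → p ≤ q → q ≤ len → G.Mor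
  deg_map : ∀ p q hpq hq, G.deg (map p q hpq hq) = q - p
  comp_ok : ∀ p q r (hpq : p ≤ q) (hqr : q ≤ r) (hr : r ≤ len),
    G.src (map p q hpq (le_trans hqr hr)) = G.rng (map q r hqr hr)
  map_comp : ∀ p q r (hpq : p ≤ q) (hqr : q ≤ r) (hr : r ≤ len),
    G.comp (map p q hpq (le_trans hqr hr)) (map q r hqr hr) = map p r (le_trans hpq hqr) hr

/-- An infinite path: a degree-preserving functor from the grid graph `Ω_k` to `G`. -/
structure InfPath (G : KGraph k) where
  map : (p q : Fin k → ℕ) → p ≤ q → G.Mor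
  deg_map : ∀ p q hpq, G.deg (map p q hpq) = q - p
  comp_ok : ∀ p q r (hpq : p ≤ q) (hqr : q ≤ r),
    G.src (map p q hpq) = G.rng (map q r hqr)
  map_comp : ∀ p q r (hpq : p ≤ q) (hqr : q ≤ r),
    G.comp (map p q hpq) (map q r hqr) = map p r (le_trans hpq hqr)

/-- The shift `σ^m x` of a finite path. -/
def Path.shift {G : KGraph k} (x : G.Path) (m : Fin k → ℕ) (hm : m ≤ x.len) : G.Path where
  len := x.len - m
  map p q hpq hq := x.map (m + p) (m + q)
    (by intro i; have h : p i ≤ q i := hpq i; simp only [Pi.add_apply]; omega)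
    (by intro i; have h1 : q i ≤ (x.len - m) i := hq i; have h2 : m i ≤ x.len i := hm i
        simp only [Pi.sub_apply] at h1; simp only [Pi.add_apply]; omega)
  deg_map := by
    intro p q hpq hq
    rw [x.deg_map]
    funext i; simp only [Pi.sub_apply, Pi.add_apply]; omega
  comp_ok := by
    intro p q r hpq hqr hr
    exact x.comp_ok _ _ _ _ _ _
  map_comp := by
    intro p q r hpq hqr hr
    exact x.map_comp _ _ _ _ _ _

/-- The shift `σ^m x` of an infinite path. -/
def InfPath.shift {G : KGraph k} (x : G.InfPath) (m : Fin k → ℕ) : G.InfPath where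
  map p q hpq := x.map (m + p) (m + q)
    (by intro i; have h : p i ≤ q i := hpq i; simp only [Pi.add_apply]; omega)
  deg_map := by
    intro p q hpq
    rw [x.deg_map]
    funext i; simp only [Pi.sub_apply, Pi.add_apply]; omega
  comp_ok := by
    intro p q r hpq hqr
    exact x.comp_ok _ _ _ _ _
  map_comp := by
    intro p q r hpq hqr
    exact x.map_comp _ _ _ _ _

/-- An infinite path is aperiodic if `σ^m x = σ^n x` implies `m = n`. -/
def InfPath.Aperiodic {G : KGraph k} (x : G.InfPath) : Prop :=
  ∀ m n : Fin k → ℕ, x.shift m = x.shift n → m = n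

/-- Condition (⋆): `l(m, m + d(l) - (m ∨ n)) ≠ l(n, n + d(l) - (m ∨ n))`. -/
def SegCond (l : G.Mor) (m n : Fin k → ℕ) : Prop :=
  ∀ (h1 : m ≤ m + (G.deg l - (m ⊔ n))) (h2 : m + (G.deg l - (m ⊔ n)) ≤ G.deg l)
    (h3 : n ≤ n + (G.deg l - (m ⊔ n))) (h4 : n + (G.deg l - (m ⊔ n)) ≤ G.deg l),
    G.seg l m (m + (G.deg l - (m ⊔ n))) h1 h2 ≠ G.seg l n (n + (G.deg l - (m ⊔ n))) h3 h4

end KGraph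

namespace KGraph

variable {k : ℕ} (G : KGraph k)

/-- A degree-zero morphism is an identity. -/
theorem eq_idm_of_deg_zero (μ : G.Mor) (h : G.deg μ = 0) : μ = G.idm (G.rng μ) := by
  have hfac : G.deg μ = 0 + 0 := by simp [h]
  obtain ⟨p, hp, hup⟩ := G.factor μ 0 0 hfac
  have h1 : (G.idm (G.rng μ), μ) = p := by
    apply hup
    refine ⟨by rw [G.idm_src], by rw [G.deg_idm], h, G.idm_comp μ⟩
  have h2 : (μ, G.idm (G.src μ)) = p := by
    apply hup
    refine ⟨by rw [G.idm_rng], h, by rw [G.deg_idm], G.comp_idm μ⟩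
  have := h1.trans h2.symm
  exact (congrArg Prod.fst this).symm

/-- Uniqueness of the middle factor in a triple decomposition. -/
theorem mid_unique (x s y x' s' y' : G.Mor)
    (hxs : G.src x = G.rng s) (hsy : G.src s = G.rng y)
    (hxs' : G.src x' = G.rng s') (hsy' : G.src s' = G.rng y')
    (hdx : G.deg x = G.deg x') (hds : G.deg s = G.deg s')
    (hc : G.comp x (G.comp s y) = G.comp x' (G.comp s' y')) :
    s = s' := by
  set l := G.comp x (G.comp s y) with hl
  have hsy2 : G.deg (G.comp s y) = G.deg s + G.deg y := G.deg_comp s y hsy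
  have hsy2' : G.deg (G.comp s' y') = G.deg s' + G.deg y' := G.deg_comp s' y' hsy'
  have hxsy : G.src x = G.rng (G.comp s y) := by rw [G.comp_rng s y hsy]; exact hxs
  have hxsy' : G.src x' = G.rng (G.comp s' y') := by rw [G.comp_rng s' y' hsy']; exact hxs'
  have hdl : G.deg l = G.deg x + (G.deg s + G.deg y) := by
    rw [hl, G.deg_comp x _ hxsy, hsy2]
  have hdl' : G.deg l = G.deg x' + (G.deg s' + G.deg y') := by
    rw [hc, G.deg_comp x' _ hxsy', hsy2']
  have hdy : G.deg y = G.deg y' := by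
    funext i
    have e1 := congrFun hdl i
    have e2 := congrFun hdl' i
    have e3 := congrFun hdx i
    have e4 := congrFun hds i
    simp only [Pi.add_apply] at e1 e2 e3 e4
    omega
  obtain ⟨p, hp, hup⟩ := G.factor l (G.deg x) (G.deg s + G.deg y) hdl
  have h1 : (x, G.comp s y) = p := hup _ ⟨hxsy, rfl, hsy2, rfl⟩
  have h2 : (x', G.comp s' y') = p := hup _
    ⟨hxsy', hdx.symm, by rw [hsy2', hds, hdy], hc.symm⟩
  have hmid : G.comp s y = G.comp s' y' := by
    have := h1.trans h2.symm
    exact congrArg Prod.snd this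
  obtain ⟨q, hq, huq⟩ := G.factor (G.comp s y) (G.deg s) (G.deg y) hsy2
  have g1 : (s, y) = q := huq _ ⟨hsy, rfl, rfl, rfl⟩
  have g2 : (s', y') = q := huq _ ⟨hsy', hds.symm, hdy.symm, hmid.symm⟩
  exact congrArg Prod.fst (g1.trans g2.symm)

/-- `seg` admits a triple decomposition. -/
theorem seg_spec (l : G.Mor) (a b : Fin k → ℕ) (hab : a ≤ b) (hb : b ≤ G.deg l) :
    ∃ x y : G.Mor, G.src x = G.rng (G.seg l a b hab hb) ∧
      G.src (G.seg l a b hab hb) = G.rng y ∧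
      G.deg x = a ∧ G.deg (G.seg l a b hab hb) = b - a ∧
      G.comp x (G.comp (G.seg l a b hab hb) y) = l := by
  have h1 : G.deg l = a + (G.deg l - a) := by
    funext i
    have h2 : a i ≤ b i := hab i
    have h3 : b i ≤ G.deg l i := hb i
    simp only [Pi.add_apply, Pi.sub_apply]
    omega
  have hp := (G.factor l a (G.deg l - a) h1).exists.choose_spec
  have h2 : G.deg ((G.factor l a (G.deg l - a) h1).exists.choose.2) =
      (b - a) + (G.deg l - b) := by
    rw [hp.2.2.1]
    funext i
    have h3 : a i ≤ b i := hab i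
    have h4 : b i ≤ G.deg l i := hb i
    simp only [Pi.add_apply, Pi.sub_apply]
    omega
  have hq := (G.factor _ (b - a) (G.deg l - b) h2).exists.choose_spec
  set p := (G.factor l a (G.deg l - a) h1).exists.choose with hpdef
  set q := (G.factor p.2 (b - a) (G.deg l - b) h2).exists.choose with hqdef
  have hseg : G.seg l a b hab hb = q.1 := rfl
  rw [hseg]
  refine ⟨p.1, q.2, ?_, hq.1, hp.2.1, hq.2.1, ?_⟩
  · rw [← hq.2.2.2] at hp
    rw [← G.comp_rng q.1 q.2 hq.1]
    exact hp.1
  · rw [hq.2.2.2]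
    exact hp.2.2.2

/-- `seg` is determined by any triple decomposition. -/
theorem seg_unique (l : G.Mor) (a b : Fin k → ℕ) (hab : a ≤ b) (hb : b ≤ G.deg l)
    (x s y : G.Mor) (hxs : G.src x = G.rng s) (hsy : G.src s = G.rng y)
    (hdx : G.deg x = a) (hds : G.deg s = b - a)
    (hc : G.comp x (G.comp s y) = l) :
    G.seg l a b hab hb = s := by
  obtain ⟨x', y', hxs', hsy', hdx', hds', hc'⟩ := G.seg_spec l a b hab hb
  exact G.mid_unique x' (G.seg l a b hab hb) y' x s y hxs' hsy' hxs hsy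
    (by rw [hdx', hdx]) (by rw [hds', hds]) (by rw [hc', hc])

/-- Segments of an extension `μ l α` located inside `l` are segments of `l`. -/
theorem seg_comp (μ l α lam : G.Mor)
    (hμl : G.src μ = G.rng l) (hlα : G.src l = G.rng α)
    (hlam : G.comp (G.comp μ l) α = lam)
    (a b : Fin k → ℕ) (hab : a ≤ b) (hbl : b ≤ G.deg l)
    (c d : Fin k → ℕ) (hcd : c ≤ d) (hdl : d ≤ G.deg lam)
    (hc : c = G.deg μ + a) (hd : d = G.deg μ + b) :
    G.seg lam c d hcd hdl = G.seg l a b hab hbl := by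
  obtain ⟨x, y, hx_s, hs_y, hdx, hds, hcomp⟩ := G.seg_spec l a b hab hbl
  set s := G.seg l a b hab hbl
  have hx_sy : G.src x = G.rng (G.comp s y) := by rw [G.comp_rng s y hs_y]; exact hx_s
  have hrngx : G.rng x = G.rng l := by rw [← hcomp, G.comp_rng x _ hx_sy]
  have hsrcl : G.src l = G.src y := by
    rw [← hcomp, G.comp_src x _ hx_sy, G.comp_src s y hs_y]
  have hyα : G.src y = G.rng α := by rw [← hsrcl]; exact hlα
  have hsyα : G.src (G.comp s y) = G.rng α := by rw [G.comp_src s y hs_y]; exact hyα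
  have hs_yα : G.src s = G.rng (G.comp y α) := by rw [G.comp_rng y α hyα]; exact hs_y
  have hμx : G.src μ = G.rng x := by rw [hμl, ← hrngx]
  have hx_W : G.src x = G.rng (G.comp s (G.comp y α)) := by
    rw [G.comp_rng s _ hs_yα]; exact hx_s
  have hkey : G.comp (G.comp μ x) (G.comp s (G.comp y α)) = lam := by
    rw [G.comp_assoc μ x _ hμx hx_W, ← G.comp_assoc s y α hs_y hyα,
      ← G.comp_assoc x _ α hx_sy hsyα, hcomp, ← G.comp_assoc μ l α hμl hlα, hlam]
  exact G.seg_unique lam c d hcd hdl (G.comp μ x) s (G.comp y α)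
    (by rw [G.comp_src μ x hμx]; exact hx_s) hs_yα
    (by rw [G.deg_comp μ x hμx, hdx, hc])
    (by funext i
        have e0 := congrFun hds i
        have e2 := congrFun hc i
        have e3 := congrFun hd i
        have e4 := hab i
        simp only [Pi.sub_apply, Pi.add_apply] at *
        omega)
    hkey

end KGraph

/-- If `Λ` has no sources and satisfies condition (F) (for every vertex `v` and
`m ≠ n` there is `λ ∈ vΛ` with `d(λ) ≥ m ∨ n` satisfying (⋆)), then for every
pair of paths `μ ≠ ν` with the same range and source and `d(μ) ∧ d(ν) = 0`
there is `τ ∈ s(μ)Λ` with `MCE(μτ, ντ) = ∅`. -/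
theorem conditionW_of_star {k : ℕ} (G : KGraph k)
    (hns : ∀ (v : G.Obj) (p : Fin k → ℕ), ∃ l : G.Mor, G.rng l = v ∧ G.deg l = p)
    (hF : ∀ (v : G.Obj) (m n : Fin k → ℕ), m ≠ n →
      ∃ l : G.Mor, G.rng l = v ∧ m ⊔ n ≤ G.deg l ∧ G.SegCond l m n) :
    ∀ μ ν : G.Mor, G.rng μ = G.rng ν → G.src μ = G.src ν → μ ≠ ν →
      G.deg μ ⊓ G.deg ν = 0 →
      ∃ τ : G.Mor, G.rng τ = G.src μ ∧ G.MCE (G.comp μ τ) (G.comp ν τ) = ∅ := by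
  intro μ ν hr hs hne hinf
  by_cases hmn : G.deg μ = G.deg ν
  · exfalso
    have hμ0 : G.deg μ = 0 := by
      funext i
      have e1 := congrFun hinf i
      have e2 := congrFun hmn i
      simp only [Pi.inf_apply, Pi.zero_apply] at e1 ⊢
      omega
    have hν0 : G.deg ν = 0 := by rw [← hmn]; exact hμ0
    have e1 := G.eq_idm_of_deg_zero μ hμ0
    have e2 := G.eq_idm_of_deg_zero ν hν0
    exact hne (by rw [e1, e2, hr])
  · obtain ⟨l, hrl, hle, hsc⟩ := hF (G.src μ) (G.deg μ) (G.deg ν) hmn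
    refine ⟨l, hrl, ?_⟩
    have hμl : G.src μ = G.rng l := hrl.symm
    have hνl : G.src ν = G.rng l := by rw [← hs]; exact hμl
    have hdμl : G.deg (G.comp μ l) = G.deg μ + G.deg l := G.deg_comp μ l hμl
    have hdνl : G.deg (G.comp ν l) = G.deg ν + G.deg l := G.deg_comp ν l hνl
    rw [Set.eq_empty_iff_forall_notMem]
    intro lam hlam
    obtain ⟨⟨⟨α, hα1, hα2⟩, ⟨β, hβ1, hβ2⟩⟩, hdeg⟩ := hlam
    have h1 : G.deg μ ≤ G.deg μ + (G.deg l - (G.deg μ ⊔ G.deg ν)) := by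
      intro i; simp only [Pi.add_apply]; omega
    have h2 : G.deg μ + (G.deg l - (G.deg μ ⊔ G.deg ν)) ≤ G.deg l := by
      intro i; have e := hle i
      simp only [Pi.add_apply, Pi.sub_apply, Pi.sup_apply] at e ⊢; omega
    have h3 : G.deg ν ≤ G.deg ν + (G.deg l - (G.deg μ ⊔ G.deg ν)) := by
      intro i; simp only [Pi.add_apply]; omega
    have h4 : G.deg ν + (G.deg l - (G.deg μ ⊔ G.deg ν)) ≤ G.deg l := by
      intro i; have e := hle i
      simp only [Pi.add_apply, Pi.sub_apply, Pi.sup_apply] at e ⊢; omega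
    have ha : (G.deg μ ⊔ G.deg ν) ≤ (G.deg μ ⊔ G.deg ν) + (G.deg l - (G.deg μ ⊔ G.deg ν)) := by
      intro i; simp only [Pi.add_apply]; omega
    have hb : (G.deg μ ⊔ G.deg ν) + (G.deg l - (G.deg μ ⊔ G.deg ν)) ≤ G.deg lam := by
      intro i
      have e := congrFun hdeg i
      have e1 := congrFun hdμl i
      have e2 := congrFun hdνl i
      have e3 := hle i
      simp only [Pi.sup_apply, Pi.add_apply, Pi.sub_apply] at e e1 e2 e3 ⊢
      omega
    have hlα : G.src l = G.rng α := by
      rw [← G.comp_src μ l hμl]; exact hα1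
    have hlβ : G.src l = G.rng β := by
      rw [← G.comp_src ν l hνl]; exact hβ1
    have hsum : ∀ i, G.deg μ i ⊓ G.deg ν i = 0 := by
      intro i
      have e := congrFun hinf i
      simpa using e
    have E1 := G.seg_comp μ l α lam hμl hlα hα2
      (G.deg ν) (G.deg ν + (G.deg l - (G.deg μ ⊔ G.deg ν))) h3 h4
      (G.deg μ ⊔ G.deg ν) ((G.deg μ ⊔ G.deg ν) + (G.deg l - (G.deg μ ⊔ G.deg ν))) ha hb
      (by funext i; have := hsum i; simp only [Pi.sup_apply, Pi.add_apply]; omega)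
      (by funext i; have := hsum i; simp only [Pi.sup_apply, Pi.add_apply, Pi.sub_apply]; omega)
    have E2 := G.seg_comp ν l β lam hνl hlβ hβ2
      (G.deg μ) (G.deg μ + (G.deg l - (G.deg μ ⊔ G.deg ν))) h1 h2
      (G.deg μ ⊔ G.deg ν) ((G.deg μ ⊔ G.deg ν) + (G.deg l - (G.deg μ ⊔ G.deg ν))) ha hb
      (by funext i; have := hsum i; simp only [Pi.sup_apply, Pi.add_apply]; omega)
      (by funext i; have := hsum i; simp only [Pi.sup_apply, Pi.add_apply, Pi.sub_apply]; omega)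
    exact hsc h1 h2 h3 h4 (E2.symm.trans E1)
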